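/- Let L be a linearly ordered MV-algebra in which the order is dense (whenever x < y there exists w with x < w < y), and let F, G be prime lattice filters of L with K(F) = K(G) = {1}. Then F ⊸ G = {1} if and only if G ⊆ F, or there exists g ∈ L with G = [g, 1] = {z | g ≤ z} and F = ]g, 1] = {z | g < z}. -/

import Mathlib

/-- An MV-algebra: a commutative monoid `(L, ⊕, 0)` with a unary `¬` satisfying
`¬¬x = x`, `x ⊕ ¬0 = ¬0` and `¬(¬x ⊕ y) ⊕ y = ¬(¬y ⊕ x) ⊕ x`. -/
class MV (L : Type*) where
  add : L → L → L
  zero : L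
  neg : L → L
  add_assoc : ∀ x y z : L, add (add x y) z = add x (add y z)
  add_comm : ∀ x y : L, add x y = add y x
  add_zero : ∀ x : L, add x zero = x
  neg_neg : ∀ x : L, neg (neg x) = x
  add_neg_zero : ∀ x : L, add x (neg zero) = neg zero
  luk : ∀ x y : L, add (neg (add (neg x) y)) y = add (neg (add (neg y) x)) x

namespace MV

variable {L : Type*} [MV L]

/-- `1 = ¬0`. -/
def one : L := neg zero

/-- `x → y = ¬x ⊕ y`. -/
def imp (x y : L) : L := add (neg x) y

/-- `x ⊗ y = ¬(¬x ⊕ ¬y)`. -/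
def otimes (x y : L) : L := neg (add (neg x) (neg y))

/-- `x ∨ y = (x → y) → y`. -/
def join (x y : L) : L := imp (imp x y) y

/-- `x ∧ y = ¬(¬x ∨ ¬y)`. -/
def meet (x y : L) : L := neg (join (neg x) (neg y))

/-- `x ≤ y` iff `x → y = 1`. -/
def le (x y : L) : Prop := imp x y = one

/-- `x < y` iff `x ≤ y` and `x ≠ y`. -/
def lt (x y : L) : Prop := le x y ∧ x ≠ y

/-- A lattice filter: nonempty, upward closed, closed under `∧`. -/
def IsLatticeFilter (F : Set L) : Prop :=
  F.Nonempty ∧ (∀ x y : L, x ∈ F → le x y → y ∈ F) ∧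
    (∀ x y : L, x ∈ F → y ∈ F → meet x y ∈ F)

/-- A prime lattice filter: a proper lattice filter such that
`x ∨ y ∈ F` implies `x ∈ F` or `y ∈ F`. -/
def IsPrimeFilter (F : Set L) : Prop :=
  IsLatticeFilter F ∧ F ≠ Set.univ ∧ ∀ x y : L, join x y ∈ F → x ∈ F ∨ y ∈ F

/-- `F ⊸ G = {z | ∀ a ∉ G, z → a ∉ F}` (intended for `F ⊆ G`). -/
def lolli (F G : Set L) : Set L := {z | ∀ a ∉ G, imp z a ∉ F}

/-- The general `F ⊸ G = (F ∩ G) ⊸ G`. -/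
def lolli' (F G : Set L) : Set L := lolli (F ∩ G) G

/-- The kernel `K(F) = {z | ∀ a ∉ F, z → a ∉ F}`. -/
def ker (F : Set L) : Set L := {z | ∀ a ∉ F, imp z a ∉ F}

/-- `F⁺ = {z | ¬z ∉ F}`. -/
def plus (F : Set L) : Set L := {z | neg z ∉ F}

/-- An implication filter: contains `1` and is closed under modus ponens. -/
def IsImplicationFilter (P : Set L) : Prop :=
  (one : L) ∈ P ∧ ∀ x y : L, x ∈ P → imp x y ∈ P → y ∈ P

/-- `x ~_P y` iff `x → y ∈ P` and `y → x ∈ P`. -/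
def simP (P : Set L) (x y : L) : Prop := imp x y ∈ P ∧ imp y x ∈ P

/-- `J_u(F, P) = {z | ∃ f ∈ F, z ~_P f}`. -/
def Ju (F P : Set L) : Set L := {z | ∃ f ∈ F, simP P z f}

/-- `J_d(F, P) = (J_u(F⁺, P))⁺`. -/
def Jd (F P : Set L) : Set L := plus (Ju (plus F) P)

end MV

/-! In a chain, lattice filters are up-sets. If `a < b` both lie in `G \ F`, then `b → a ≠ 1`
lies in `F ⊸ G`, so `F ⊸ G = {1}` lets `G \ F` have at most one point `g`, and then
`G = [g, 1]`, `F = ]g, 1]`. Conversely, `G ⊆ F` gives `F ⊸ G = K(G)`, and in the interval case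
density plus the injectivity of `x ↦ z → x` below `1` leaves only `z = 1` in `F ⊸ G`. -/

namespace MV

variable {L : Type*} [MV L]

theorem neg_one : neg (one : L) = zero := neg_neg zero

theorem zero_add (x : L) : add zero x = x := by rw [add_comm]; exact add_zero x

theorem add_one (x : L) : add x one = one := add_neg_zero x

theorem one_add (x : L) : add one x = one := by rw [add_comm]; exact add_neg_zero x

theorem imp_one_left (a : L) : imp one a = a := by
  show add (neg one) a = a
  rw [neg_one, zero_add]

theorem neg_add_self (x : L) : add (neg x) x = one := by
  have h := luk x (one : L)
  rw [add_one, neg_one, zero_add] at h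
  exact h.symm

theorem le_refl (x : L) : le x x := neg_add_self x

theorem le_one (x : L) : le x one := add_neg_zero (neg x)

theorem le_antisymm {x y : L} (h₁ : le x y) (h₂ : le y x) : x = y := by
  have h := luk x y
  rw [show add (neg x) y = one from h₁, show add (neg y) x = one from h₂, neg_one,
    zero_add, zero_add] at h
  exact h.symm

theorem le_iff_exists_add {x y : L} : le x y ↔ ∃ z, add x z = y := by
  constructor
  · intro h
    refine ⟨neg (add (neg y) x), ?_⟩
    have hl := luk x y
    rw [show add (neg x) y = one from h, neg_one, zero_add] at hl
    rw [add_comm]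
    exact hl.symm
  · rintro ⟨z, rfl⟩
    show add (neg x) (add x z) = one
    rw [← add_assoc, neg_add_self, one_add]

theorem le_trans {x y z : L} (h₁ : le x y) (h₂ : le y z) : le x z := by
  obtain ⟨u, rfl⟩ := le_iff_exists_add.mp h₁
  obtain ⟨v, rfl⟩ := le_iff_exists_add.mp h₂
  exact le_iff_exists_add.mpr ⟨add u v, (add_assoc x u v).symm⟩

theorem add_le_add_left {a a' : L} (h : le a a') (z : L) : le (add z a) (add z a') := by
  obtain ⟨u, rfl⟩ := le_iff_exists_add.mp h
  exact le_iff_exists_add.mpr ⟨u, add_assoc z a u⟩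

theorem imp_le_imp_left {a a' : L} (h : le a a') (z : L) : le (imp z a) (imp z a') :=
  add_le_add_left h (neg z)

theorem imp_neg_neg (x y : L) : imp (neg y) (neg x) = imp x y := by
  show add (neg (neg y)) (neg x) = add (neg x) y
  rw [neg_neg, add_comm]

theorem neg_le_neg {x y : L} (h : le x y) : le (neg y) (neg x) := by
  show imp (neg y) (neg x) = one
  rw [imp_neg_neg]
  exact h

theorem join_comm (x y : L) : join x y = join y x := luk x y

theorem join_of_le {x y : L} (h : le x y) : join x y = y := by
  show imp (imp x y) y = y
  rw [show imp x y = one from h, imp_one_left]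

theorem meet_of_le {x y : L} (h : le x y) : meet x y = x := by
  show neg (join (neg x) (neg y)) = x
  rw [join_comm, join_of_le (neg_le_neg h), neg_neg]

theorem imp_imp_of_le {a b : L} (h : le a b) : imp (imp b a) a = b := by
  show join b a = b
  rw [join_comm, join_of_le h]

theorem meet_neg_eq_otimes (a x : L) : meet a (neg x) = otimes (add x a) (neg x) := by
  unfold meet join imp otimes
  simp only [neg_neg, add_comm a x]

theorem ne_one_of_lt {g f : L} (h : lt g f) : g ≠ one := by
  rintro rfl
  exact h.2 (le_antisymm h.1 (le_one f))

theorem eq_of_le_of_not_lt {x y : L} (h : le x y) (hn : ¬ lt x y) : x = y := by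
  by_contra hne
  exact hn ⟨h, hne⟩

theorem lt_of_not_le (hlin : ∀ x y : L, le x y ∨ le y x) {x y : L} (h : ¬ le x y) : lt y x :=
  ⟨(hlin x y).resolve_left h, fun e => h (e ▸ le_refl x)⟩

theorem lt_of_mem_of_not_mem (hlin : ∀ x y : L, le x y ∨ le y x) {F : Set L}
    (hF : ∀ x y : L, x ∈ F → le x y → y ∈ F) {x y : L} (hx : x ∈ F) (hy : y ∉ F) : lt y x :=
  lt_of_not_le hlin fun h => hy (hF x y hx h)

/-- In a chain, `a ↦ x ⊕ a` is injective as long as it stays below `1`: both arguments then lie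
below `¬x`, and `a ∧ ¬x = (x ⊕ a) ⊗ ¬x`. -/
theorem add_left_cancel_of_ne_one (hlin : ∀ x y : L, le x y ∨ le y x)
    {x a a' : L} (h : add x a = add x a') (hne : add x a ≠ one) : a = a' := by
  have le_neg : ∀ b : L, add x b ≠ one → le b (neg x) := fun b hb =>
    (hlin (neg x) b).resolve_left fun hc => hb (by rwa [le, imp, neg_neg] at hc)
  have hmeet : meet a (neg x) = meet a' (neg x) := by
    rw [meet_neg_eq_otimes, meet_neg_eq_otimes, h]
  rwa [meet_of_le (le_neg a hne), meet_of_le (le_neg a' (h ▸ hne))] at hmeet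

theorem one_mem_lolli {F G : Set L} (h : F ⊆ G) : one ∈ lolli F G := fun a ha hmem =>
  ha (h (imp_one_left a ▸ hmem))

theorem lolli'_eq_ker_of_subset {F G : Set L} (h : G ⊆ F) : lolli' F G = ker G := by
  rw [lolli', Set.inter_eq_right.mpr h]
  rfl

/-- For `c ∉ G` we have `c ≤ a`, so `(b → a) → c ≤ (b → a) → a = b ∉ F`. -/
theorem imp_mem_lolli' (hlin : ∀ x y : L, le x y ∨ le y x) {F G : Set L}
    (hF : ∀ x y : L, x ∈ F → le x y → y ∈ F) (hG : ∀ x y : L, x ∈ G → le x y → y ∈ G)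
    {a b : L} (ha : a ∈ G) (hb : b ∉ F) (hab : le a b) : imp b a ∈ lolli' F G := by
  intro c hc hmem
  have hca : le c a := (hlin a c).resolve_left fun h => hc (hG a c ha h)
  have hle : le (imp (imp b a) c) b := by
    simpa only [imp_imp_of_le hab] using imp_le_imp_left hca (imp b a)
  exact hb (hF _ b hmem.1 hle)

theorem subsingleton_diff_of_lolli'_eq (hlin : ∀ x y : L, le x y ∨ le y x) {F G : Set L}
    (hF : ∀ x y : L, x ∈ F → le x y → y ∈ F) (hG : ∀ x y : L, x ∈ G → le x y → y ∈ G)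
    (h : lolli' F G = {one}) : (G \ F).Subsingleton := by
  intro a ha b hb
  wlog hab : le a b generalizing a b
  · exact (this hb ha ((hlin a b).resolve_left hab)).symm
  have hba : imp b a = one := by
    simpa only [h, Set.mem_singleton_iff] using imp_mem_lolli' hlin hF hG ha.1 hb.2 hab
  exact le_antisymm hab hba

theorem eq_Ici_and_eq_Ioi_of_subsingleton_diff (hlin : ∀ x y : L, le x y ∨ le y x)
    {F G : Set L}
    (hF : ∀ x y : L, x ∈ F → le x y → y ∈ F) (hG : ∀ x y : L, x ∈ G → le x y → y ∈ G)
    {g : L} (hgG : g ∈ G) (hgF : g ∉ F) (hdiff : (G \ F).Subsingleton) :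
    G = {z : L | le g z} ∧ F = {z : L | lt g z} := by
  have lt_of_mem : ∀ z ∈ F, lt g z := fun z hz => lt_of_mem_of_not_mem hlin hF hz hgF
  constructor
  · ext z
    refine ⟨fun hz => ?_, hG g z hgG⟩
    by_cases hzF : z ∈ F
    · exact (lt_of_mem z hzF).1
    · exact hdiff ⟨hgG, hgF⟩ ⟨hz, hzF⟩ ▸ le_refl g
  · ext z
    refine ⟨lt_of_mem z, fun hz => ?_⟩
    by_contra hzF
    exact hz.2 (hdiff ⟨hgG, hgF⟩ ⟨hG g z hgG hz.1, hzF⟩)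

/-- An element `z ≠ 1` of the left side is not in `K([g, 1])`, so `z → a = g` for some `a < g`.
By density pick `a < w < g`: then `z → w = g` too, and cancellation gives `a = w`. -/
theorem lolli'_Ioi_Ici (hlin : ∀ x y : L, le x y ∨ le y x)
    (hdense : ∀ x y : L, lt x y → ∃ w : L, lt x w ∧ lt w y) {g : L} (hg : g ≠ one)
    (hker : ker {z : L | le g z} = {one}) :
    lolli' {z : L | lt g z} {z : L | le g z} = {one} := by
  have hsub : {z : L | lt g z} ⊆ {z : L | le g z} := fun _ h => h.1
  rw [lolli', Set.inter_eq_left.mpr hsub]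
  refine Set.eq_singleton_iff_unique_mem.mpr ⟨one_mem_lolli hsub, fun z hz => ?_⟩
  by_contra hz1
  have hzker : z ∉ ker {z : L | le g z} := by rw [hker]; exact hz1
  obtain ⟨a, ha, hza⟩ : ∃ a, ¬ le g a ∧ le g (imp z a) := by
    simpa [ker] using hzker
  have imp_eq : ∀ b, ¬ le g b → le g (imp z b) → imp z b = g := fun b hb h =>
    (eq_of_le_of_not_lt h (hz b hb)).symm
  obtain ⟨w, haw, hwg⟩ := hdense a g (lt_of_not_le hlin ha)
  have hw : ¬ le g w := fun h => hwg.2 (le_antisymm hwg.1 h)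
  have hza' : imp z a = g := imp_eq a ha hza
  have hzw : imp z w = g := imp_eq w hw (le_trans hza (imp_le_imp_left haw.1 z))
  exact haw.2 (add_left_cancel_of_ne_one hlin (hza'.trans hzw.symm) (hza' ▸ hg : imp z a ≠ one))

end MV

open MV
theorem stmt_19_general {L : Type*} [MV L]
    (hlin : ∀ x y : L, le x y ∨ le y x)
    (hdense : ∀ x y : L, lt x y → ∃ w : L, lt x w ∧ lt w y)
    (F G : Set L) (hF : IsPrimeFilter F) (hG : IsPrimeFilter G)
    (hKG : ker G = {(one : L)}) :
    lolli' F G = {(one : L)} ↔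
      G ⊆ F ∨ ∃ g : L, G = {z : L | le g z} ∧ F = {z : L | lt g z} := by
  have hFup := hF.1.2.1
  have hGup := hG.1.2.1
  constructor
  · intro h
    by_cases hGF : G ⊆ F
    · exact Or.inl hGF
    obtain ⟨g, hgG, hgF⟩ := Set.not_subset.mp hGF
    exact Or.inr ⟨g, eq_Ici_and_eq_Ioi_of_subsingleton_diff hlin hFup hGup hgG hgF
      (subsingleton_diff_of_lolli'_eq hlin hFup hGup h)⟩
  · rintro (hGF | ⟨g, rfl, rfl⟩)
    · rw [lolli'_eq_ker_of_subset hGF, hKG]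
    · obtain ⟨f, hf⟩ := hF.1.1
      exact lolli'_Ioi_Ici hlin hdense (ne_one_of_lt hf) hKG

/-- In a densely linearly ordered MV-algebra, for prime lattice
filters `F`, `G` with `K(F) = K(G) = {1}`: `F ⊸ G = {1}` iff `G ⊆ F` or
`G = [g, 1]` and `F = ]g, 1]` for some `g`. -/
theorem stmt_19 {L : Type*} [MV L]
    (hlin : ∀ x y : L, le x y ∨ le y x)
    (hdense : ∀ x y : L, lt x y → ∃ w : L, lt x w ∧ lt w y)
    (F G : Set L) (hF : IsPrimeFilter F) (hG : IsPrimeFilter G)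
    (hKF : ker F = {(one : L)}) (hKG : ker G = {(one : L)}) :
    lolli' F G = {(one : L)} ↔
      G ⊆ F ∨ ∃ g : L, G = {z : L | le g z} ∧ F = {z : L | lt g z} :=
  stmt_19_general hlin hdense F G hF hG hKG
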